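/- Let f: F₂ⁿ → F₂ have degree d ≥ 1. The number of slow points of f, i.e. points a with deg(D_a f) = d − 1, is at least 2ⁿ − 2^{n−d}. -/
import Mathlib


/-- First-order derivative of a Boolean function: `D_a f (x) = f (x + a) + f x`. -/
def bderiv {V : Type} [Add V] (f : V → ZMod 2) (a : V) : V → ZMod 2 :=
  fun x => f (x + a) + f x

/-- The algebraic degree of a Boolean function: the minimal total degree of a polynomial
representing it (this equals the degree of its algebraic normal form). -/
noncomputable def bdeg {σ : Type} (f : (σ → ZMod 2) → ZMod 2) : ℕ :=
  sInf { d | ∃ p : MvPolynomial σ (ZMod 2),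
    (∀ x, MvPolynomial.eval x p = f x) ∧ p.totalDegree = d }

open MvPolynomial Finset

namespace Stmt17Aux

variable {n : ℕ}

/-- indicator finsupp of a finset -/
def indic (U : Finset (Fin n)) : Fin n →₀ ℕ :=
  ⟨U, fun i => if i ∈ U then 1 else 0, by intro i; simp⟩

@[simp] lemma indic_apply (U : Finset (Fin n)) (i : Fin n) :
    indic U i = if i ∈ U then 1 else 0 := rfl

@[simp] lemma indic_support (U : Finset (Fin n)) : (indic U).support = U := rfl

lemma indic_sum (U : Finset (Fin n)) : ((indic U).sum fun _ e => e) = U.card := by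
  rw [Finsupp.sum]
  simp only [indic_support]
  rw [Finset.card_eq_sum_ones]
  exact Finset.sum_congr rfl (by intro i hi; simp [hi])

/-- multilinear predicate -/
def ML (p : MvPolynomial (Fin n) (ZMod 2)) : Prop :=
  ∀ t ∈ p.support, t = indic t.support

lemma ML.add {p q : MvPolynomial (Fin n) (ZMod 2)} (hp : ML p) (hq : ML q) : ML (p + q) := by
  intro t ht
  have := MvPolynomial.support_add ht
  rcases Finset.mem_union.1 this with h | h
  · exact hp t h
  · exact hq t h

lemma ML.sub {p q : MvPolynomial (Fin n) (ZMod 2)} (hp : ML p) (hq : ML q) : ML (p - q) := by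
  rw [CharTwo.sub_eq_add]; exact hp.add hq

end Stmt17Aux

namespace Stmt17Aux

variable {n : ℕ}

noncomputable def sh (a : Fin n → ZMod 2) (p : MvPolynomial (Fin n) (ZMod 2)) :
    MvPolynomial (Fin n) (ZMod 2) :=
  bind₁ (fun i => X i + C (a i)) p

lemma eval_sh (a x : Fin n → ZMod 2) (p : MvPolynomial (Fin n) (ZMod 2)) :
    eval x (sh a p) = eval (x + a) p := by
  have : (eval x : MvPolynomial (Fin n) (ZMod 2) →+* ZMod 2) = eval₂Hom (RingHom.id _) x := by
    ext <;> simp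
  rw [sh]
  rw [show (eval x) ((bind₁ fun i => X i + C (a i)) p)
      = eval₂Hom (RingHom.id _) x ((bind₁ fun i => X i + C (a i)) p) from by rw [← this]]
  rw [eval₂Hom_bind₁]
  rw [show (eval (x + a) : MvPolynomial (Fin n) (ZMod 2) →+* ZMod 2) p
      = eval₂Hom (RingHom.id _) (x + a) p from by
    rw [show (eval (x+a) : MvPolynomial (Fin n) (ZMod 2) →+* ZMod 2) = eval₂Hom (RingHom.id _) (x+a) from by ext <;> simp]]
  have h2 : (fun i => eval₂Hom (RingHom.id (ZMod 2)) x (X i + C (a i))) = x + a := by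
    funext i; simp
  rw [h2]

lemma shift_prod (T : Finset (Fin n)) (a : Fin n → ZMod 2) :
    ∏ i ∈ T, (X i + C (a i)) =
      ∑ U ∈ T.powerset, monomial (indic U) (∏ i ∈ T \ U, a i) := by
  rw [Finset.prod_add]
  refine Finset.sum_congr rfl ?_
  intro U hU
  rw [Finset.mem_powerset] at hU
  rw [monomial_eq, Finsupp.prod]
  simp only [indic_support, indic_apply]
  rw [show (∏ i ∈ U, (X i : MvPolynomial (Fin n) (ZMod 2)) ^ (if i ∈ U then 1 else 0))
      = ∏ i ∈ U, X i from Finset.prod_congr rfl (by intro i hi; simp [hi])]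
  rw [show (C (∏ i ∈ T \ U, a i) : MvPolynomial (Fin n) (ZMod 2))
      = ∏ i ∈ T \ U, C (a i) from map_prod _ _ _]
  ring

end Stmt17Aux

namespace Stmt17Aux

variable {n : ℕ}

lemma coeff_sh {p : MvPolynomial (Fin n) (ZMod 2)} (hp : ML p) (a : Fin n → ZMod 2)
    (s : Fin n →₀ ℕ) :
    coeff s (sh a p) =
      ∑ t ∈ p.support, if s = indic s.support ∧ s.support ⊆ t.support
        then coeff t p * ∏ i ∈ t.support \ s.support, a i else 0 := by
  conv_lhs => rw [sh, show p = ∑ t ∈ p.support, monomial t (coeff t p) from p.as_sum, map_sum]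
  rw [MvPolynomial.coeff_sum]
  refine Finset.sum_congr rfl ?_
  intro t ht
  rw [bind₁_monomial]
  have htt := hp t ht
  rw [show ∏ i ∈ t.support, (X i + C (a i)) ^ t i = ∏ i ∈ t.support, (X i + C (a i)) from
    Finset.prod_congr rfl (fun i hi => by
      rw [show t i = 1 from by conv_lhs => rw [htt, indic_apply]; simp [hi] ]
      exact pow_one _)]
  rw [shift_prod, Finset.mul_sum]
  rw [MvPolynomial.coeff_sum]
  have key : ∀ U ∈ (t.support).powerset,
      coeff s (C (coeff t p) * monomial (indic U) (∏ i ∈ t.support \ U, a i))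
        = if indic U = s then coeff t p * ∏ i ∈ t.support \ U, a i else 0 := by
    intro U hU
    rw [coeff_C_mul, coeff_monomial]
    split <;> simp
  rw [Finset.sum_congr rfl key]
  by_cases h : s = indic s.support ∧ s.support ⊆ t.support
  · rw [if_pos h]
    rw [Finset.sum_eq_single_of_mem s.support (Finset.mem_powerset.2 h.2)]
    · rw [if_pos h.1.symm]
    · intro U _ hUne
      rw [if_neg]
      intro hUs
      exact hUne (by rw [← hUs, indic_support])
  · rw [if_neg h, Finset.sum_eq_zero]
    intro U hU
    rw [if_neg]
    intro hUs
    exact h ⟨by rw [← hUs, indic_support], by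
      rw [← hUs, indic_support]; exact Finset.mem_powerset.1 hU⟩

end Stmt17Aux

namespace Stmt17Aux

variable {n : ℕ}

lemma coeff_sh_zero {p : MvPolynomial (Fin n) (ZMod 2)} (hp : ML p) (a : Fin n → ZMod 2)
    {s : Fin n →₀ ℕ} (hs : s ≠ indic s.support) : coeff s (sh a p) = 0 := by
  rw [coeff_sh hp a s]
  exact Finset.sum_eq_zero fun t _ => if_neg (fun h => hs h.1)

lemma ML.sh {p : MvPolynomial (Fin n) (ZMod 2)} (hp : ML p) (a : Fin n → ZMod 2) :
    ML (sh a p) := by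
  intro t ht
  by_contra h
  exact (MvPolynomial.mem_support_iff.1 ht) (coeff_sh_zero hp a h)

lemma card_support_le_sum (t : Fin n →₀ ℕ) : t.support.card ≤ t.sum fun _ e => e := by
  rw [Finsupp.sum, Finset.card_eq_sum_ones]
  exact Finset.sum_le_sum fun i hi => Nat.one_le_iff_ne_zero.2 (Finsupp.mem_support_iff.1 hi)

lemma sum_indic_support {t : Fin n →₀ ℕ} (ht : t = indic t.support) :
    (t.sum fun _ e => e) = t.support.card := by
  conv_lhs => rw [ht]
  rw [indic_sum]

lemma coeff_sh_high {p : MvPolynomial (Fin n) (ZMod 2)} (hp : ML p) (a : Fin n → ZMod 2)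
    {s : Fin n →₀ ℕ} (hs : p.totalDegree ≤ s.sum fun _ e => e) :
    coeff s (sh a p) = coeff s p := by
  by_cases hml : s = indic s.support
  · rw [coeff_sh hp a s]
    rw [Finset.sum_eq_single s]
    · by_cases hmem : s ∈ p.support
      · rw [if_pos ⟨hml, Finset.Subset.refl _⟩]
        simp
      · rw [MvPolynomial.notMem_support_iff.1 hmem]
        simp
    · intro t ht htne
      rw [if_neg]
      rintro ⟨h1, h2⟩
      -- cards
      have hts : t.support.card ≤ s.support.card := by
        have h3 : (t.sum fun _ e => e) ≤ p.totalDegree :=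
          MvPolynomial.le_totalDegree ht
        have := sum_indic_support (hp t ht)
        have h5 := sum_indic_support hml
        omega
      have : s.support = t.support := Finset.eq_of_subset_of_card_le h2 hts
      exact htne (by rw [hp t ht, ← this, ← hml])
    · intro hs'
      rw [MvPolynomial.notMem_support_iff.1 hs']
      rw [if_pos ⟨hml, Finset.Subset.refl _⟩]
      simp
  · rw [coeff_sh_zero hp a hml]
    by_contra h
    exact hml (hp s (MvPolynomial.mem_support_iff.2 fun hc => h hc.symm))

end Stmt17Aux

namespace Stmt17Aux

variable {n : ℕ}

lemma totalDegree_sub_sh_le {p : MvPolynomial (Fin n) (ZMod 2)} (hp : ML p)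
    (a : Fin n → ZMod 2) {k : ℕ} (hk : p.totalDegree ≤ k + 1) :
    (sh a p - p).totalDegree ≤ k := by
  rw [MvPolynomial.totalDegree]
  apply Finset.sup_le
  intro s hs
  by_contra hlt
  push_neg at hlt
  have h1 : p.totalDegree ≤ s.sum fun _ e => e := by omega
  have h2 := coeff_sh_high hp a h1
  have hc := MvPolynomial.mem_support_iff.1 hs
  rw [MvPolynomial.coeff_sub, h2, sub_self] at hc
  exact hc rfl

lemma ML.eq_zero {p : MvPolynomial (Fin n) (ZMod 2)} (hp : ML p)
    (h0 : ∀ x, eval x p = 0) : p = 0 := by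
  have hall : ∀ U : Finset (Fin n), coeff (indic U) p = 0 := by
    intro U
    induction U using Finset.strongInduction with
    | _ U ih =>
      have hev := h0 (fun i => if i ∈ U then 1 else 0)
      rw [eval_eq] at hev
      have hterm : ∀ t ∈ p.support,
          (coeff t p * ∏ i ∈ t.support, (if i ∈ U then (1:ZMod 2) else 0) ^ t i)
            = if t.support ⊆ U then coeff t p else 0 := by
        intro t ht
        by_cases hsub : t.support ⊆ U
        · rw [if_pos hsub]
          rw [Finset.prod_congr rfl (fun i hi => by rw [if_pos (hsub hi), one_pow])]
          simp
        · rw [if_neg hsub]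
          obtain ⟨j, hj1, hj2⟩ := Finset.not_subset.1 hsub
          rw [Finset.prod_eq_zero hj1 (by
            rw [if_neg hj2]
            exact zero_pow (Finsupp.mem_support_iff.1 hj1))]
          simp
      rw [Finset.sum_congr rfl hterm] at hev
      rw [Finset.sum_eq_single (indic U)] at hev
      · by_cases hmem : (indic U).support ⊆ U
        · rwa [if_pos hmem] at hev
        · exact absurd (by rw [indic_support]) hmem
      · intro t ht htne
        by_cases hsub : t.support ⊆ U
        · rw [if_pos hsub]
          have hlt : t.support ⊂ U := by
            rcases hsub.eq_or_ssubset with h | h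
            · exact absurd (by rw [hp t ht, h]) htne
            · exact h
          rw [hp t ht]
          exact ih _ hlt
        · rw [if_neg hsub]
      · intro hmem
        rw [MvPolynomial.notMem_support_iff.1 hmem]
        simp
  ext s
  rw [MvPolynomial.coeff_zero]
  by_cases hs : s ∈ p.support
  · rw [hp s hs]; exact hall _
  · exact MvPolynomial.notMem_support_iff.1 hs

end Stmt17Aux

namespace Stmt17Aux

variable {n : ℕ}

noncomputable def reduce (p : MvPolynomial (Fin n) (ZMod 2)) : MvPolynomial (Fin n) (ZMod 2) :=
  ∑ t ∈ p.support, monomial (indic t.support) (coeff t p)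

lemma zmod2_pow {k : ℕ} (hk : k ≠ 0) (y : ZMod 2) : y ^ k = y := by
  induction k with
  | zero => exact absurd rfl hk
  | succ m ih =>
    rcases Nat.eq_zero_or_pos m with h | h
    · subst h; simp
    · rw [pow_succ, ih (by omega)]
      have : ∀ z : ZMod 2, z * z = z := by decide
      exact this y

lemma eval_reduce (p : MvPolynomial (Fin n) (ZMod 2)) (x : Fin n → ZMod 2) :
    eval x (reduce p) = eval x p := by
  rw [reduce, map_sum]
  conv_rhs => rw [eval_eq]
  refine Finset.sum_congr rfl ?_
  intro t ht
  rw [eval_monomial]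
  congr 1
  rw [Finsupp.prod]
  simp only [indic_support, indic_apply]
  refine Finset.prod_congr rfl ?_
  intro i hi
  rw [if_pos hi, pow_one, zmod2_pow (Finsupp.mem_support_iff.1 hi)]

lemma coeff_reduce (p : MvPolynomial (Fin n) (ZMod 2)) (s : Fin n →₀ ℕ) :
    coeff s (reduce p) = ∑ t ∈ p.support, if indic t.support = s then coeff t p else 0 := by
  rw [reduce, MvPolynomial.coeff_sum]
  exact Finset.sum_congr rfl fun t _ => coeff_monomial _ _ _

lemma ML.reduce (p : MvPolynomial (Fin n) (ZMod 2)) : ML (reduce p) := by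
  intro s hs
  have hc := MvPolynomial.mem_support_iff.1 hs
  rw [coeff_reduce] at hc
  obtain ⟨t, _, ht2⟩ := Finset.exists_ne_zero_of_sum_ne_zero hc
  have : indic t.support = s := by
    by_contra h; rw [if_neg h] at ht2; exact ht2 rfl
  rw [← this, indic_support]

lemma totalDegree_reduce_le (p : MvPolynomial (Fin n) (ZMod 2)) :
    (reduce p).totalDegree ≤ p.totalDegree := by
  refine le_trans (MvPolynomial.totalDegree_finset_sum _ _) ?_
  apply Finset.sup_le
  intro t ht
  refine le_trans (MvPolynomial.totalDegree_monomial_le _ _) ?_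
  have h2 : ((indic t.support).sum fun _ => id) = t.support.card := indic_sum t.support
  rw [h2]
  exact le_trans (card_support_le_sum t) (MvPolynomial.le_totalDegree ht)

end Stmt17Aux

namespace Stmt17Aux

variable {n : ℕ}

lemma hc_sub_sh {q : MvPolynomial (Fin n) (ZMod 2)} (hq : ML q) (a : Fin n → ZMod 2) {k : ℕ}
    (hk : q.totalDegree ≤ k) :
    homogeneousComponent k (sh a q - q) = 0 := by
  apply homogeneousComponent_eq_zero'
  intro s hs hsum
  have hsum' : (s.sum fun _ e => e) = k := by rw [Finsupp.sum]; exact hsum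
  have h1 : q.totalDegree ≤ s.sum fun _ e => e := by omega
  have h2 := coeff_sh_high hq a h1
  exact absurd (by rw [MvPolynomial.coeff_sub, h2, sub_self]) (MvPolynomial.mem_support_iff.1 hs)

lemma sh_sh (a b : Fin n → ZMod 2) (p : MvPolynomial (Fin n) (ZMod 2)) :
    sh a (sh b p) = sh (a + b) p := by
  rw [sh, sh, sh, bind₁_bind₁]
  have h : (fun i => (bind₁ fun i => X i + C (a i)) (X i + C (b i)))
      = fun i : Fin n => X i + C ((a + b) i) := by
    funext i
    rw [map_add, bind₁_X_right, bind₁_C_right]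
    simp [add_assoc]
  rw [h]

lemma sh_zero (p : MvPolynomial (Fin n) (ZMod 2)) : sh 0 p = p := by
  rw [sh]
  rw [show (fun i => X i + C ((0 : Fin n → ZMod 2) i)) = (X : Fin n → MvPolynomial (Fin n) (ZMod 2))
    from by funext i; simp]
  rw [bind₁_X_left]
  rfl

noncomputable def Phi (P : MvPolynomial (Fin n) (ZMod 2)) (k : ℕ) (a : Fin n → ZMod 2) :
    MvPolynomial (Fin n) (ZMod 2) :=
  homogeneousComponent k (sh a P - P)

lemma Phi_zero (P : MvPolynomial (Fin n) (ZMod 2)) (k : ℕ) : Phi P k 0 = 0 := by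
  rw [Phi, sh_zero, sub_self, map_zero]

lemma Phi_add {P : MvPolynomial (Fin n) (ZMod 2)} (hP : ML P) {d : ℕ}
    (hPd : P.totalDegree ≤ d) (a b : Fin n → ZMod 2) :
    Phi P (d - 1) (a + b) = Phi P (d - 1) a + Phi P (d - 1) b := by
  have hQb : ML (sh b P - P) := (hP.sh b).sub hP
  have hQbd : (sh b P - P).totalDegree ≤ d - 1 :=
    totalDegree_sub_sh_le hP b (by omega)
  have key : sh (a + b) P - P = (sh a P - P) + (sh b P - P) + (sh a (sh b P - P) - (sh b P - P)) := by
    rw [← sh_sh]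
    rw [show sh a (sh b P - P) = sh a (sh b P) - sh a P from map_sub (bind₁ _).toRingHom _ _]
    abel
  rw [Phi, Phi, Phi, key, map_add, map_add, hc_sub_sh hQb a hQbd, add_zero]

end Stmt17Aux

namespace Stmt17Aux

variable {n : ℕ}

lemma ker_supported {P : MvPolynomial (Fin n) (ZMod 2)} (hP : ML P) {d : ℕ}
    (hPd : P.totalDegree = d) {t0 : Fin n →₀ ℕ} (ht0 : t0 ∈ P.support)
    (ht0d : t0.support.card = d)
    {w : Fin n → ZMod 2} (hw : ∀ j, j ∉ t0.support → w j = 0)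
    (hker : Phi P (d - 1) w = 0) (hd : 1 ≤ d) :
    w = 0 := by
  funext i0
  show w i0 = 0
  by_cases hi0 : i0 ∈ t0.support
  swap
  · exact hw i0 hi0
  set T := t0.support with hT
  set U0 := T.erase i0 with hU0
  set u := indic U0 with hu
  have husupp : u.support = U0 := by rw [hu, indic_support]
  have hU0card : U0.card = d - 1 := by
    rw [hU0, Finset.card_erase_of_mem hi0, ht0d]
  have husum : (u.sum fun _ e => e) = d - 1 := by rw [hu, indic_sum, hU0card]
  have ht0sum : (t0.sum fun _ e => e) = d := by
    rw [sum_indic_support (hP t0 ht0)]; exact ht0d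
  have hne : u ≠ t0 := by
    intro h; rw [← h] at ht0sum; omega
  have ht0i : t0 = indic T := hP t0 ht0
  have hTins : insert i0 U0 = T := Finset.insert_erase hi0
  have hTd : T \ U0 = {i0} := by
    ext j
    simp only [Finset.mem_sdiff, hU0, Finset.mem_erase, Finset.mem_singleton]
    constructor
    · rintro ⟨hj1, hj2⟩
      by_contra hne'
      exact hj2 ⟨hne', hj1⟩
    · rintro rfl
      exact ⟨hi0, fun h => h.1 rfl⟩
  have hcoeff : coeff u (sh w P) - coeff u P = 0 := by
    have h1 : coeff u (Phi P (d-1) w) = 0 := by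
      rw [hker, MvPolynomial.coeff_zero]
    rw [Phi, coeff_homogeneousComponent, if_pos (by rw [Finsupp.sum] at husum; exact husum)] at h1
    rwa [MvPolynomial.coeff_sub] at h1
  have hml : u = indic u.support := by rw [husupp]
  have hsh : coeff u (sh w P) = coeff u P + coeff t0 P * w i0 := by
    rw [coeff_sh hP w u]
    have hterm : ∀ t ∈ P.support,
        (if u = indic u.support ∧ u.support ⊆ t.support
          then coeff t P * ∏ i ∈ t.support \ u.support, w i else 0)
        = (if t = u then coeff u P else 0) + (if t = t0 then coeff t0 P * w i0 else 0) := by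
      intro t ht
      by_cases h1 : t = u
      · subst h1
        rw [if_pos ⟨hml, Finset.Subset.refl _⟩, if_pos rfl, if_neg hne]
        simp
      · by_cases h2 : t = t0
        · subst h2
          rw [if_neg h1, zero_add, if_pos rfl]
          rw [if_pos ⟨hml, by rw [husupp, ← hT]; exact Finset.erase_subset _ _⟩]
          congr 1
          rw [husupp, ← hT, hTd, Finset.prod_singleton]
        · rw [if_neg h1, if_neg h2, add_zero]
          by_cases hcond : u = indic u.support ∧ u.support ⊆ t.support
          · rw [if_pos hcond]
            have hsub : U0 ⊆ t.support := by rw [← husupp]; exact hcond.2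
            have html := hP t ht
            have hcard : t.support.card ≤ d := by
              have e1 := sum_indic_support html
              have e2 := MvPolynomial.le_totalDegree ht
              omega
            have hU0ne : t.support ≠ U0 := by
              intro h
              exact h1 (by rw [html, h, ← hu])
            have hcard2 : U0.card < t.support.card :=
              Finset.card_lt_card (lt_of_le_of_ne hsub (Ne.symm hU0ne))
            have hcard3 : (t.support \ U0).card = 1 := by
              rw [Finset.card_sdiff_of_subset hsub]
              omega
            obtain ⟨j, hj⟩ := Finset.card_eq_one.1 hcard3
            have hjmem : j ∈ t.support \ U0 := by rw [hj]; exact Finset.mem_singleton_self j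
            have htsupp : t.support = insert j U0 := by
              rw [← Finset.union_sdiff_of_subset hsub, hj]
              rw [Finset.union_comm]
              rfl
            have hji0 : j ≠ i0 := by
              intro h
              subst h
              exact h2 (by rw [html, htsupp, hTins, ← ht0i])
            have hjT : j ∉ T := by
              intro h
              rw [← hTins, Finset.mem_insert] at h
              rcases h with h | h
              · exact hji0 h
              · exact (Finset.mem_sdiff.1 hjmem).2 h
            rw [husupp, hj, Finset.prod_singleton, hw j hjT, mul_zero]
          · rw [if_neg hcond]
    rw [Finset.sum_congr rfl hterm, Finset.sum_add_distrib]
    rw [Finset.sum_ite_eq' P.support u (fun _ => coeff u P)]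
    rw [Finset.sum_ite_eq' P.support t0 (fun _ => coeff t0 P * w i0)]
    rw [if_pos ht0]
    congr 1
    by_cases hus : u ∈ P.support
    · rw [if_pos hus]
    · rw [if_neg hus, MvPolynomial.notMem_support_iff.1 hus]
  rw [hsh, add_sub_cancel_left] at hcoeff
  rcases mul_eq_zero.1 hcoeff with h | h
  · exact absurd h (MvPolynomial.mem_support_iff.1 ht0)
  · exact h

end Stmt17Aux

namespace Stmt17Aux

variable {n : ℕ}

lemma bdeg_le {f : (Fin n → ZMod 2) → ZMod 2} (p : MvPolynomial (Fin n) (ZMod 2))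
    (hp : ∀ x, eval x p = f x) : bdeg f ≤ p.totalDegree :=
  Nat.sInf_le ⟨p, hp, rfl⟩

lemma Q_rep {P : MvPolynomial (Fin n) (ZMod 2)} {f : (Fin n → ZMod 2) → ZMod 2}
    (hrep : ∀ x, eval x P = f x) (a : Fin n → ZMod 2) (x : Fin n → ZMod 2) :
    eval x (sh a P - P) = bderiv f a x := by
  rw [map_sub, eval_sh, hrep, hrep, bderiv, CharTwo.sub_eq_add]

end Stmt17Aux


open Stmt17Aux

/-- If `deg f = d ≥ 1`, then the number of slow points of `f`, i.e. points `a` with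
`deg (D_a f) = d - 1`, is at least `2ⁿ - 2^{n-d}`. -/
theorem stmt17 {n d : ℕ} (f : (Fin n → ZMod 2) → ZMod 2)
    (hd : bdeg f = d) (h1 : 1 ≤ d) :
    2 ^ n - 2 ^ (n - d)
      ≤ Nat.card {a : Fin n → ZMod 2 | bdeg (bderiv f a) = d - 1} := by
  classical
  -- obtain a minimal multilinear representative P
  have hSne : {e | ∃ p : MvPolynomial (Fin n) (ZMod 2),
      (∀ x, MvPolynomial.eval x p = f x) ∧ p.totalDegree = e}.Nonempty := by
    by_contra h
    rw [Set.not_nonempty_iff_eq_empty] at h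
    rw [bdeg, h, Nat.sInf_empty] at hd
    omega
  obtain ⟨p0, hp0rep, hp0deg⟩ := Nat.sInf_mem hSne
  set P := reduce p0 with hPdef
  have hP : ML P := ML.reduce p0
  have hPrep : ∀ x, MvPolynomial.eval x P = f x := fun x => by
    rw [hPdef, eval_reduce, hp0rep]
  have hPd : P.totalDegree = d := by
    apply le_antisymm
    · refine le_trans (totalDegree_reduce_le p0) ?_
      rw [hp0deg, ← hd, bdeg]
    · rw [← hd]
      exact bdeg_le P hPrep
  -- top monomial
  have hPne : P ≠ 0 := by
    intro h
    rw [h, MvPolynomial.totalDegree_zero] at hPd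
    omega
  obtain ⟨t0, ht0, ht0eq⟩ :=
    Finset.exists_mem_eq_sup P.support
      (MvPolynomial.support_nonempty.2 hPne) (fun s => s.sum fun _ e => e)
  have ht0sum : (t0.sum fun _ e => e) = d := by
    rw [← hPd, MvPolynomial.totalDegree, ht0eq]
  have ht0card : t0.support.card = d := by
    rw [← ht0sum, sum_indic_support (hP t0 ht0)]
  set T := t0.support with hT
  -- kernel set
  set kerset : Set (Fin n → ZMod 2) := {a | Phi P (d - 1) a = 0} with hker
  -- complement of kernel is slow
  have hslow : ∀ a ∉ kerset, bdeg (bderiv f a) = d - 1 := by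
    intro a ha
    have hQml : ML (sh a P - P) := (hP.sh a).sub hP
    have hQd : (sh a P - P).totalDegree ≤ d - 1 :=
      totalDegree_sub_sh_le hP a (by omega)
    have hub : bdeg (bderiv f a) ≤ d - 1 :=
      le_trans (bdeg_le _ (Q_rep hPrep a)) hQd
    by_contra hne
    have hlt : bdeg (bderiv f a) < d - 1 := lt_of_le_of_ne hub hne
    -- minimal rep of the derivative
    have hSne2 : {e | ∃ p : MvPolynomial (Fin n) (ZMod 2),
        (∀ x, MvPolynomial.eval x p = bderiv f a x) ∧ p.totalDegree = e}.Nonempty :=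
      ⟨_, sh a P - P, Q_rep hPrep a, rfl⟩
    obtain ⟨r, hrrep, hrdeg⟩ := Nat.sInf_mem hSne2
    have hr'ml : ML (reduce r) := ML.reduce r
    have hr'deg : (reduce r).totalDegree < d - 1 := by
      have := totalDegree_reduce_le r
      rw [hrdeg] at this
      exact lt_of_le_of_lt this hlt
    have hQeq : sh a P - P = reduce r := by
      rw [← sub_eq_zero]
      apply (hQml.sub hr'ml).eq_zero
      intro x
      rw [map_sub, Q_rep hPrep a, eval_reduce, hrrep, sub_self]
    exact ha ((congrArg (⇑(MvPolynomial.homogeneousComponent (σ := Fin n) (R := ZMod 2) (d - 1))) hQeq).trans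
      (homogeneousComponent_eq_zero _ _ hr'deg))
  -- kernel is small : injection into functions on the complement of T
  have hkcard : Nat.card kerset ≤ 2 ^ (n - d) := by
    have hinj : Function.Injective
        (fun (a : kerset) => (fun j : {j : Fin n // j ∉ T} => a.1 j.1)) := by
      intro a1 a2 h
      have hw : ∀ j, j ∉ T → a1.1 j - a2.1 j = 0 := by
        intro j hj
        have := congrFun h ⟨j, hj⟩
        simp only at this
        rw [this, sub_self]
      have hphi : Phi P (d - 1) (a1.1 - a2.1) = 0 := by
        have hsub : a1.1 - a2.1 = a1.1 + a2.1 := by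
          funext i; exact CharTwo.sub_eq_add _ _
        rw [hsub, Phi_add hP (le_of_eq hPd), a1.2, a2.2, add_zero]
      have := ker_supported hP hPd ht0 ht0card hw hphi h1
      ext i
      have h2 := congrFun this i
      simp only [Pi.sub_apply, Pi.zero_apply] at h2
      exact sub_eq_zero.1 h2
    refine le_trans (Nat.card_le_card_of_injective _ hinj) ?_
    rw [Nat.card_eq_fintype_card]
    rw [Fintype.card_fun]
    have : Fintype.card {j : Fin n // j ∉ T} = n - d := by
      rw [Fintype.card_subtype_compl]
      simp [Fintype.card_coe, ht0card]
    rw [this]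
    simp
  -- counting
  have hsub : kersetᶜ ⊆ {a : Fin n → ZMod 2 | bdeg (bderiv f a) = d - 1} := fun a ha => hslow a ha
  have h2n : Nat.card (Fin n → ZMod 2) = 2 ^ n := by
    simp [Nat.card_eq_fintype_card]
  have hcompl := Set.ncard_add_ncard_compl kerset
  have hkn : kerset.ncard = Nat.card kerset := (Nat.card_coe_set_eq kerset).symm
  have hmono : (kersetᶜ).ncard ≤ ({a : Fin n → ZMod 2 | bdeg (bderiv f a) = d - 1}).ncard :=
    Set.ncard_le_ncard hsub (Set.toFinite _)
  have hfinal : Nat.card {a : Fin n → ZMod 2 | bdeg (bderiv f a) = d - 1}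
      = ({a : Fin n → ZMod 2 | bdeg (bderiv f a) = d - 1} : Set _).ncard :=
    Nat.card_coe_set_eq _
  rw [hfinal]
  rw [h2n] at hcompl
  omega
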